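/- If a rectangle R = [0,a] × [0,b] is partitioned into rectangles each with an integer side, then a ∈ ℤ or b ∈ ℤ. -/
import Mathlib


open Complex Real MeasureTheory

/-- A closed axis-parallel rectangle. -/
def rect (x y w h : ℝ) : Set (ℝ × ℝ) := Set.Icc x (x + w) ×ˢ Set.Icc y (y + h)

/-- The corresponding open rectangle. -/
def orect (x y w h : ℝ) : Set (ℝ × ℝ) := Set.Ioo x (x + w) ×ˢ Set.Ioo y (y + h)


noncomputable def cc : ℂ := 2 * Real.pi * Complex.I

lemma cc_ne : cc ≠ 0 := Complex.two_pi_I_ne_zero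

lemma icc_int (u v : ℝ) (huv : u ≤ v) :
    ∫ s in Set.Icc u v, Complex.exp (cc * s) =
      (Complex.exp (cc * v) - Complex.exp (cc * u)) / cc := by
  rw [MeasureTheory.integral_Icc_eq_integral_Ioc, ← intervalIntegral.integral_of_le huv,
    integral_exp_mul_complex cc_ne]

lemma rect_int (x y w h : ℝ) (hw : 0 ≤ w) (hh : 0 ≤ h) :
    ∫ p in rect x y w h, Complex.exp (cc * (p.1 + p.2)) =
      ((Complex.exp (cc * (x + w)) - Complex.exp (cc * x)) / cc) *
        ((Complex.exp (cc * (y + h)) - Complex.exp (cc * y)) / cc) := by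
  have key : ∀ p : ℝ × ℝ, Complex.exp (cc * (p.1 + p.2)) =
      Complex.exp (cc * p.1) * Complex.exp (cc * p.2) := by
    intro p; rw [← Complex.exp_add]; ring_nf
  rw [show (rect x y w h) = Set.Icc x (x+w) ×ˢ Set.Icc y (y+h) from rfl]
  simp_rw [key]
  rw [MeasureTheory.Measure.volume_eq_prod, MeasureTheory.setIntegral_prod_mul (fun s : ℝ => Complex.exp (cc * s)) (fun s : ℝ => Complex.exp (cc * s)),
    icc_int x (x+w) (by linarith), icc_int y (y+h) (by linarith)]
  norm_cast

lemma rect_null_diff (x y w h : ℝ) :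
    volume (rect x y w h \ orect x y w h) = 0 := by
  have hsub : orect x y w h ⊆ rect x y w h :=
    Set.prod_mono Set.Ioo_subset_Icc_self Set.Ioo_subset_Icc_self
  have hm : MeasurableSet (orect x y w h) :=
    (measurableSet_Ioo).prod measurableSet_Ioo
  have hfin : volume (orect x y w h) ≠ ⊤ := by
    rw [show orect x y w h = Set.Ioo x (x+w) ×ˢ Set.Ioo y (y+h) from rfl,
      MeasureTheory.Measure.volume_eq_prod, MeasureTheory.Measure.prod_prod,
      Real.volume_Ioo, Real.volume_Ioo]
    exact ENNReal.mul_ne_top ENNReal.ofReal_ne_top ENNReal.ofReal_ne_top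
  rw [measure_diff hsub hm.nullMeasurableSet hfin]
  rw [show orect x y w h = Set.Ioo x (x+w) ×ˢ Set.Ioo y (y+h) from rfl,
    show rect x y w h = Set.Icc x (x+w) ×ˢ Set.Icc y (y+h) from rfl,
    MeasureTheory.Measure.volume_eq_prod, MeasureTheory.Measure.prod_prod,
    MeasureTheory.Measure.prod_prod, Real.volume_Ioo, Real.volume_Ioo,
    Real.volume_Icc, Real.volume_Icc]
  simp

lemma exp_factor_zero (u : ℝ) (m : ℤ) :
    Complex.exp (cc * (u + (m:ℝ))) - Complex.exp (cc * u) = 0 := by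
  have h1 : Complex.exp (cc * (m:ℝ)) = 1 := by
    push_cast
    rw [mul_comm]
    exact Complex.exp_int_mul_two_pi_mul_I m
  push_cast
  rw [mul_add, Complex.exp_add]
  push_cast at h1
  rw [h1, mul_one, sub_self]

lemma exp_one_int (r : ℝ) (hr : Complex.exp (cc * r) = 1) : ∃ m : ℤ, r = m := by
  obtain ⟨n, hn⟩ := Complex.exp_eq_one_iff.mp hr
  have h2 : cc * (r:ℂ) = cc * (n:ℂ) := by rw [hn]; unfold cc; ring
  have := mul_left_cancel₀ cc_ne h2
  exact ⟨n, by exact_mod_cast this⟩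

/-- If `[0,a] × [0,b]` is partitioned into rectangles each with an integer side, then
the integral of `e^{2πi(x+y)}` over the rectangle vanishes if neither `a` nor `b` is
an integer — and hence `a ∈ ℤ` or `b ∈ ℤ`. -/
theorem stmt6 (a b : ℝ) (ha : 0 < a) (hb : 0 < b)
    (n : ℕ) (x y w h : Fin n → ℝ)
    (hw : ∀ i, 0 < w i) (hh : ∀ i, 0 < h i)
    (hside : ∀ i, (∃ m : ℤ, w i = m) ∨ (∃ m : ℤ, h i = m))
    (hdisj : Pairwise fun i j =>
      Disjoint (orect (x i) (y i) (w i) (h i)) (orect (x j) (y j) (w j) (h j)))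
    (hcover : (⋃ i, rect (x i) (y i) (w i) (h i)) = rect 0 0 a b) :
    ((¬ ∃ m : ℤ, a = m) → (¬ ∃ m : ℤ, b = m) →
      (∫ p in (0:ℝ)..a, ∫ q in (0:ℝ)..b,
        Complex.exp (2 * Real.pi * Complex.I * (p + q))) = 0) ∧
    ((∃ m : ℤ, a = m) ∨ (∃ m : ℤ, b = m)) := by
  have key : (∃ m : ℤ, a = m) ∨ (∃ m : ℤ, b = m) := by
    set F : ℝ × ℝ → ℂ := fun p => Complex.exp (cc * (p.1 + p.2)) with hFdef
    have hcont : Continuous F := by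
      apply Complex.continuous_exp.comp
      fun_prop
    have hcomp : IsCompact (rect 0 0 a b) := isCompact_Icc.prod isCompact_Icc
    have hmeasR : MeasurableSet (rect 0 0 a b) :=
      measurableSet_Icc.prod measurableSet_Icc
    have hint : IntegrableOn F (rect 0 0 a b) :=
      hcont.continuousOn.integrableOn_compact hcomp
    have hmO : ∀ i, MeasurableSet (orect (x i) (y i) (w i) (h i)) :=
      fun i => measurableSet_Ioo.prod measurableSet_Ioo
    have hsub : ∀ i, orect (x i) (y i) (w i) (h i) ⊆ rect (x i) (y i) (w i) (h i) :=
      fun i => Set.prod_mono Set.Ioo_subset_Icc_self Set.Ioo_subset_Icc_self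
    have hsubU : (⋃ i, orect (x i) (y i) (w i) (h i)) ⊆ rect 0 0 a b := by
      rw [← hcover]; exact Set.iUnion_mono hsub
    have haeq : rect 0 0 a b =ᵐ[volume] ⋃ i, orect (x i) (y i) (w i) (h i) := by
      rw [MeasureTheory.ae_eq_set]
      constructor
      · refine measure_mono_null ?_
          (measure_iUnion_null fun i => rect_null_diff (x i) (y i) (w i) (h i))
        rw [← hcover]
        rintro p ⟨hp1, hp2⟩
        obtain ⟨i, hi⟩ := Set.mem_iUnion.mp hp1
        exact Set.mem_iUnion.mpr ⟨i, hi, fun hc => hp2 (Set.mem_iUnion.mpr ⟨i, hc⟩)⟩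
      · rw [Set.diff_eq_empty.mpr hsubU]; simp
    have piece : ∀ i, ∫ p in orect (x i) (y i) (w i) (h i), F p = 0 := by
      intro i
      have haeq2 : orect (x i) (y i) (w i) (h i) =ᵐ[volume]
          rect (x i) (y i) (w i) (h i) := by
        rw [MeasureTheory.ae_eq_set]
        refine ⟨?_, rect_null_diff _ _ _ _⟩
        rw [Set.diff_eq_empty.mpr (hsub i)]; simp
      rw [MeasureTheory.setIntegral_congr_set haeq2, hFdef,
        rect_int _ _ _ _ (hw i).le (hh i).le]
      rcases hside i with ⟨m, hm⟩ | ⟨m, hm⟩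
      · rw [hm, exp_factor_zero (x i) m, zero_div, zero_mul]
      · rw [hm, exp_factor_zero (y i) m, zero_div, mul_zero]
    have big0 : ∫ p in rect 0 0 a b, F p = 0 := by
      rw [MeasureTheory.setIntegral_congr_set haeq,
        MeasureTheory.integral_iUnion hmO hdisj (hint.mono_set hsubU),
        tsum_fintype]
      exact Finset.sum_eq_zero fun i _ => piece i
    rw [rect_int 0 0 a b ha.le hb.le] at big0
    simp only [zero_add, Complex.ofReal_zero, mul_zero, Complex.exp_zero] at big0
    rcases mul_eq_zero.mp big0 with h0 | h0
    · left
      apply exp_one_int a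
      have := (div_eq_zero_iff.mp h0).resolve_right cc_ne
      linear_combination this
    · right
      apply exp_one_int b
      have := (div_eq_zero_iff.mp h0).resolve_right cc_ne
      linear_combination this
  exact ⟨fun hna hnb => ((key.resolve_left hna) |> hnb).elim, key⟩
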